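/- Let A be a unital C*-algebra, φ : A → B(H) completely positive with minimal Stinespring dilation φ = V* ρ(·) V on K. For T in the commutant ρ(A)' with 0 ≤ T ≤ 1_K, the map φ_T(a) := V* T ρ(a) V is completely positive and satisfies 0 ≤ φ_T ≤ φ in the order where ψ₁ ≤ ψ₂ means ψ₂ − ψ₁ is completely positive. -/

import Mathlib

/-!
Since `T` commutes with `ρ(A)`, the amplification of `a ↦ V* T ρ(a) V` at `b* b` is the matrix
`[∑ₖ (ρ(bₖᵢ) V)* T (ρ(bₖⱼ) V)]ᵢⱼ`, whose block operator on `Hⁿ` is `∑ₖ Rₖ* T Rₖ ≥ 0` with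
`Rₖ = ∑ⱼ ρ(bₖⱼ) V prⱼ`. A positive operator `S* S` on `Hⁿ` has block matrix `c* c`, where `c` is
the block matrix of `S`. Finally `φ − φ_T = φ_{1 − T}`, and `1 − T` is again a positive element
of `ρ(A)'`.
-/

noncomputable section
open ContinuousLinearMap

/-- Complete positivity via matrix amplifications. -/
def IsCPMap {A B : Type*} [NonUnitalRing A] [StarRing A] [Module ℂ A]
    [NonUnitalRing B] [StarRing B] [Module ℂ B] (φ : A →ₗ[ℂ] B) : Prop :=
  ∀ (n : ℕ) (a : Matrix (Fin n) (Fin n) A),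
    (∃ b : Matrix (Fin n) (Fin n) A, a = star b * b) →
      ∃ c : Matrix (Fin n) (Fin n) B, a.map φ = star c * c

variable {A : Type*} [CStarAlgebra A]
variable {H K : Type*} [NormedAddCommGroup H] [InnerProductSpace ℂ H] [CompleteSpace H]
  [NormedAddCommGroup K] [InnerProductSpace ℂ K] [CompleteSpace K]

/-- The map `X ↦ V* (T ∘ X) V`, as a linear map. -/
def conjMap (V : H →L[ℂ] K) (T : K →L[ℂ] K) : (K →L[ℂ] K) →ₗ[ℂ] (H →L[ℂ] H) where
  toFun X := (adjoint V) ∘L (T ∘L (X ∘L V))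
  map_add' X Y := by simp [add_comp, comp_add]
  map_smul' c X := by simp [smul_comp, comp_smul]

section BlockOperator

variable {ι E : Type*} [Fintype ι] [DecidableEq ι]
  [NormedAddCommGroup E] [InnerProductSpace ℂ E]

def blockIncl (i : ι) : E →L[ℂ] PiLp 2 (fun _ : ι => E) :=
  (PiLp.continuousLinearEquiv 2 ℂ (fun _ : ι => E)).symm.toContinuousLinearMap ∘L
    ContinuousLinearMap.single ℂ (fun _ : ι => E) i

lemma adjoint_blockIncl [CompleteSpace E] (i : ι) :
    adjoint (blockIncl (E := E) i) = PiLp.proj 2 (fun _ : ι => E) i := by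
  refine ((eq_adjoint_iff _ _).2 fun y x => ?_).symm
  simp [blockIncl, PiLp.inner_apply, apply_ite]

lemma adjoint_proj [CompleteSpace E] (i : ι) :
    adjoint (PiLp.proj (𝕜 := ℂ) 2 (fun _ : ι => E) i) = blockIncl i := by
  rw [← adjoint_blockIncl, adjoint_adjoint]

lemma sum_blockIncl_comp_proj :
    ∑ k, blockIncl k ∘L PiLp.proj 2 (fun _ : ι => E) k = 1 := by
  ext x i
  simp [blockIncl, Pi.single_apply]

def blockOp (M : Matrix ι ι (E →L[ℂ] E)) :
    PiLp 2 (fun _ : ι => E) →L[ℂ] PiLp 2 (fun _ : ι => E) :=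
  ∑ i, ∑ j, blockIncl i ∘L M i j ∘L PiLp.proj 2 (fun _ : ι => E) j

lemma proj_comp_blockOp_comp_blockIncl (M : Matrix ι ι (E →L[ℂ] E)) (i j : ι) :
    PiLp.proj 2 (fun _ : ι => E) i ∘L blockOp M ∘L blockIncl j = M i j := by
  ext x
  simp [blockOp, blockIncl, apply_ite]

set_option synthInstance.maxHeartbeats 100000 in
lemma exists_eq_star_mul_of_blockOp_nonneg [CompleteSpace E] (M : Matrix ι ι (E →L[ℂ] E))
    (hM : 0 ≤ blockOp M) : ∃ c : Matrix ι ι (E →L[ℂ] E), M = star c * c := by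
  obtain ⟨S, hS⟩ := CStarAlgebra.nonneg_iff_eq_star_mul_self.mp hM
  let c : Matrix ι ι (E →L[ℂ] E) :=
    .of fun k j => PiLp.proj 2 (fun _ : ι => E) k ∘L S ∘L blockIncl j
  refine ⟨c, Matrix.ext fun i j => ?_⟩
  calc M i j = PiLp.proj 2 (fun _ : ι => E) i ∘L adjoint S ∘L
        (∑ k, blockIncl k ∘L PiLp.proj 2 (fun _ : ι => E) k) ∘L S ∘L blockIncl j := by
        rw [sum_blockIncl_comp_proj, ← proj_comp_blockOp_comp_blockIncl M, hS, star_eq_adjoint]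
        rfl
    _ = ∑ k, adjoint (c k i) ∘L c k j := by
        simp only [c, Matrix.of_apply, adjoint_comp, adjoint_blockIncl, adjoint_proj,
          comp_finsetSum, finsetSum_comp, comp_assoc]
    _ = (star c * c) i j := by
        simp only [Matrix.mul_apply, Matrix.star_apply, star_eq_adjoint, mul_def]

variable {F : Type*} [NormedAddCommGroup F] [InnerProductSpace ℂ F] [CompleteSpace F]

lemma blockOp_gram_nonneg [CompleteSpace E] (Y : Matrix ι ι (E →L[ℂ] F)) {T : F →L[ℂ] F}
    (hT : 0 ≤ T) : 0 ≤ blockOp (Matrix.of fun i j => ∑ k, adjoint (Y k i) ∘L T ∘L Y k j) := by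
  set R : ι → PiLp 2 (fun _ : ι => E) →L[ℂ] F :=
    fun k => ∑ j, Y k j ∘L PiLp.proj 2 (fun _ : ι => E) j
  have hR : blockOp (Matrix.of fun i j => ∑ k, adjoint (Y k i) ∘L T ∘L Y k j) =
      ∑ k, adjoint (R k) ∘L T ∘L R k := by
    simp only [blockOp, R, map_sum, adjoint_comp, adjoint_proj, Matrix.of_apply, comp_finsetSum,
      finsetSum_comp, comp_assoc]
    conv_lhs => rw [Finset.sum_comm]; arg 2; ext; rw [Finset.sum_comm]
    exact Finset.sum_comm
  rw [hR]
  exact Finset.sum_nonneg fun k _ =>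
    (nonneg_iff_isPositive _).2 (((nonneg_iff_isPositive T).1 hT).adjoint_conj (R k))

end BlockOperator

lemma isCPMap_conjMap_comp {B : Type*} [Ring B] [StarRing B] [Algebra ℂ B]
    (ρ : B →⋆ₐ[ℂ] (K →L[ℂ] K)) (V : H →L[ℂ] K) {T : K →L[ℂ] K}
    (hT : ∀ b, Commute T (ρ b)) (hT0 : 0 ≤ T) :
    IsCPMap ((conjMap V T).comp ρ.toLinearMap) := by
  rintro n _ ⟨b, rfl⟩
  apply exists_eq_star_mul_of_blockOp_nonneg
  convert blockOp_gram_nonneg (Matrix.of fun k j => ρ (b k j) ∘L V) hT0 using 2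
  ext1 i j
  simp only [Matrix.map_apply, Matrix.mul_apply, Matrix.star_apply, Matrix.of_apply, map_sum,
    adjoint_comp]
  refine Finset.sum_congr rfl fun k _ => ?_
  change adjoint V ∘L (T * ρ (star (b k i) * b k j)) ∘L V = _
  rw [map_mul, ← mul_assoc, (hT _).eq, map_star, star_eq_adjoint]
  rfl

theorem radon_nikodym_cp_le_general
    (φ : A →ₗ[ℂ] (H →L[ℂ] H))
    (ρ : A →⋆ₐ[ℂ] (K →L[ℂ] K)) (V : H →L[ℂ] K)
    (hdil : ∀ a, φ a = (adjoint V) ∘L ((ρ a) ∘L V))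
    (T : K →L[ℂ] K) (hT : T ∈ Set.centralizer (Set.range (⇑ρ)))
    (hT0 : 0 ≤ T) (hT1 : T ≤ 1) :
    IsCPMap ((conjMap V T).comp ρ.toLinearMap) ∧
      IsCPMap (φ - (conjMap V T).comp ρ.toLinearMap) := by
  have hcomm (a : A) : Commute T (ρ a) := (hT (ρ a) ⟨a, rfl⟩).symm
  have hφ : φ - (conjMap V T).comp ρ.toLinearMap = (conjMap V (1 - T)).comp ρ.toLinearMap := by
    ext1 a
    simp [hdil, conjMap, sub_comp, comp_sub, one_def]
  refine ⟨isCPMap_conjMap_comp ρ V hcomm hT0, ?_⟩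
  rw [hφ]
  exact isCPMap_conjMap_comp ρ V (fun a => (Commute.one_left _).sub_left (hcomm a))
    (sub_nonneg.2 hT1)

/-- for `T` in the commutant of `ρ(A)` with `0 ≤ T ≤ 1`, the map
`φ_T(a) = V* T ρ(a) V` is completely positive and `0 ≤ φ_T ≤ φ` in the CP order. -/
theorem radon_nikodym_cp_le
    (φ : A →ₗ[ℂ] (H →L[ℂ] H)) (hcp : IsCPMap φ)
    (ρ : A →⋆ₐ[ℂ] (K →L[ℂ] K)) (V : H →L[ℂ] K)
    (hdil : ∀ a, φ a = (adjoint V) ∘L ((ρ a) ∘L V))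
    (hmin : (Submodule.span ℂ {x : K | ∃ a, ∃ h : H, ρ a (V h) = x}).topologicalClosure = ⊤)
    (T : K →L[ℂ] K) (hT : T ∈ Set.centralizer (Set.range (⇑ρ)))
    (hT0 : 0 ≤ T) (hT1 : T ≤ 1) :
    IsCPMap ((conjMap V T).comp ρ.toLinearMap) ∧
      IsCPMap (φ - (conjMap V T).comp ρ.toLinearMap) :=
  radon_nikodym_cp_le_general φ ρ V hdil T hT hT0 hT1
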